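/- arXiv:0712.2636 — 5 statements merged into one kernel-verified Lean document; each statement's English description precedes it below -/
import Mathlib

section
/- Let L be a maximal isotropic subspace of V ⊕ V* with respect to the pairing ⟨X+ξ, Y+η⟩ = η(X) + ξ(Y), and let U = p_{V*}(L) be its projection to V*. Then L ∩ V = Ann(U), where V is identified with V ⊕ 0 ⊆ V ⊕ V*. -/
/-- The canonical pairing on `V ⊕ V*`: `⟨X+ξ, Y+η⟩ = η(X) + ξ(Y)`. -/
def diracPair {K V : Type*} [Field K] [AddCommGroup V] [Module K V]
    (p q : V × Module.Dual K V) : K :=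
  q.2 p.1 + p.2 q.1

/-- A linear Dirac structure: a subset of `V ⊕ V*` equal to its own orthogonal
complement with respect to the canonical pairing (hence automatically a maximal
isotropic linear subspace). -/
def IsDirac {K V : Type*} [Field K] [AddCommGroup V] [Module K V]
    (L : Set (V × Module.Dual K V)) : Prop :=
  ∀ p, p ∈ L ↔ ∀ q ∈ L, diracPair p q = 0

/-- For a linear Dirac structure `L ⊆ V ⊕ V*` with `U = p_{V*}(L)`, one has
`L ∩ V = Ann(U)`. -/
theorem dirac_inter_eq_ann
    {K V : Type*} [Field K] [AddCommGroup V] [Module K V] [FiniteDimensional K V]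
    (h2 : (2 : K) ≠ 0)
    (L : Set (V × Module.Dual K V)) (hL : IsDirac L) (x : V) :
    (x, (0 : Module.Dual K V)) ∈ L ↔
      ∀ ξ : Module.Dual K V, (∃ y : V, (y, ξ) ∈ L) → ξ x = 0 := by
  constructor
  · intro hx ξ ⟨y, hy⟩
    have := (hL (x, 0)).mp hx (y, ξ) hy
    simpa [diracPair] using this
  · intro h
    refine (hL (x, 0)).mpr ?_
    rintro ⟨y, η⟩ hq
    have := h η ⟨y, hq⟩
    simp [diracPair, this]
end

section
/- For a subspace E ⊆ V and an alternating bilinear form ε on E, the set L(E, ε) = {x + ξ ∈ E ⊕ V* : ξ|_E = ε(x, −)} is a maximal isotropic subspace of V ⊕ V*; in particular dim L(E,ε) = dim V. -/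
/-- `L(E, ε) = {x + ξ ∈ E ⊕ V* : ξ|_E = ε(x, −)}` for a subspace `E ⊆ V` and a
bilinear form `ε` on `E`. -/
def LSub {K V : Type*} [Field K] [AddCommGroup V] [Module K V]
    (E : Submodule K V) (ε : E →ₗ[K] E →ₗ[K] K) :
    Set (V × Module.Dual K V) :=
  {p | ∃ hx : p.1 ∈ E, ∀ y : E, p.2 y = ε ⟨p.1, hx⟩ y}

section aux
variable {K V : Type*} [Field K] [AddCommGroup V] [Module K V]
variable (E : Submodule K V) (ε : E →ₗ[K] E →ₗ[K] K)

lemma skew (hε : ∀ x : E, ε x x = 0) (x y : E) : ε x y = - ε y x := by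
  have h := hε (x + y)
  simp only [map_add, LinearMap.add_apply, hε x, hε y] at h
  linear_combination h

/-- `LSub E ε` as a submodule. -/
def LMod : Submodule K (V × Module.Dual K V) where
  carrier := LSub E ε
  zero_mem' := ⟨E.zero_mem, fun y => by
    show (0 : Module.Dual K V) y = ε ⟨(0 : V), E.zero_mem⟩ y
    rw [show (⟨(0 : V), E.zero_mem⟩ : E) = 0 from rfl, map_zero]
    rfl⟩
  add_mem' := by
    rintro ⟨x, ξ⟩ ⟨y, η⟩ ⟨hx, hξ⟩ ⟨hy, hη⟩
    refine ⟨E.add_mem hx hy, fun z => ?_⟩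
    show (ξ + η) z = ε ⟨x + y, E.add_mem hx hy⟩ z
    rw [show (⟨x + y, E.add_mem hx hy⟩ : E) = ⟨x, hx⟩ + ⟨y, hy⟩ from rfl, map_add]
    simp [hξ z, hη z]
  smul_mem' := by
    rintro c ⟨x, ξ⟩ ⟨hx, hξ⟩
    refine ⟨E.smul_mem c hx, fun z => ?_⟩
    show (c • ξ) z = ε ⟨c • x, E.smul_mem c hx⟩ z
    rw [show (⟨c • x, E.smul_mem c hx⟩ : E) = c • ⟨x, hx⟩ from rfl, map_smul]
    simp [hξ z]

end aux


/-- For a subspace `E ⊆ V` and `ε ∈ ∧²E*`, the set `L(E,ε)` is a maximal isotropic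
subspace of `V ⊕ V*`; in particular its dimension equals `dim V`. -/
theorem isDirac_LSub
    {K V : Type*} [Field K] [AddCommGroup V] [Module K V] [FiniteDimensional K V]
    (h2 : (2 : K) ≠ 0)
    (E : Submodule K V) (ε : E →ₗ[K] E →ₗ[K] K) (hε : ∀ x : E, ε x x = 0) :
    IsDirac (LSub E ε) ∧
      Module.finrank K (Submodule.span K (LSub E ε)) = Module.finrank K V := by
  obtain ⟨r, hr⟩ := E.subtype.exists_leftInverse_of_injective E.ker_subtype
  have hrE : ∀ z : E, r z = z := fun z => by
    have := congrFun (congrArg DFunLike.coe hr) z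
    simpa using this
  constructor
  · intro p
    constructor
    · rintro ⟨hx, hξ⟩ ⟨y, η⟩ ⟨hy, hη⟩
      have hs := skew E ε hε ⟨p.1, hx⟩ ⟨y, hy⟩
      simp only [diracPair, hη ⟨p.1, hx⟩, hξ ⟨y, hy⟩]
      rw [hs]; ring
    · intro h
      have hx : p.1 ∈ E := by
        rw [← Subspace.dualAnnihilator_dualCoannihilator_eq (W := E),
          Submodule.mem_dualCoannihilator]
        intro f hf
        have hq : ((0 : V), f) ∈ LSub E ε := by
          refine ⟨E.zero_mem, fun y => ?_⟩
          rw [Submodule.mem_dualAnnihilator] at hf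
          rw [hf y y.2, show (⟨(0 : V), E.zero_mem⟩ : E) = 0 from rfl, map_zero]
          rfl
        have := h _ hq
        simpa [diracPair] using this
      refine ⟨hx, fun y => ?_⟩
      have hq : ((y : V), (ε y).comp r) ∈ LSub E ε := by
        refine ⟨y.2, fun z => ?_⟩
        have h' : (⟨(y : V), y.2⟩ : E) = y := rfl
        simp [hrE z, h']
      have h0 := h _ hq
      simp only [diracPair, LinearMap.comp_apply] at h0
      have hrp : r p.1 = ⟨p.1, hx⟩ := hrE ⟨p.1, hx⟩
      rw [hrp] at h0
      have hs := skew E ε hε ⟨p.1, hx⟩ y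
      linear_combination h0 - hs
  · have hspan : Submodule.span K (LSub E ε) = LMod E ε :=
      Submodule.span_eq (LMod E ε)
    rw [hspan]
    let f : (E × E.dualAnnihilator) →ₗ[K] (V × Module.Dual K V) :=
      { toFun := fun xξ => ((xξ.1 : V), (ε xξ.1).comp r + (xξ.2 : Module.Dual K V))
        map_add' := by
          rintro ⟨x, ξ⟩ ⟨y, η⟩
          refine Prod.ext ?_ ?_
          · rfl
          · show (ε (x + y)).comp r + ↑(ξ + η) = _
            ext v
            simp [map_add, LinearMap.add_comp]
            try ring
        map_smul' := by
          rintro c ⟨x, ξ⟩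
          refine Prod.ext ?_ ?_
          · rfl
          · show (ε (c • x)).comp r + ↑(c • ξ) = _
            ext v
            simp [map_smul, LinearMap.smul_comp]
            try ring }
    have hinj : Function.Injective f := by
      rintro ⟨x, ξ⟩ ⟨y, η⟩ hxy
      simp only [f, LinearMap.coe_mk, AddHom.coe_mk, Prod.mk.injEq] at hxy
      obtain ⟨h1, h3⟩ := hxy
      have hx : x = y := Subtype.ext h1
      subst hx
      have hξ : ξ = η := Subtype.ext (add_left_cancel h3)
      rw [hξ]
    have hrange : LinearMap.range f = LMod E ε := by
      apply le_antisymm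
      · rintro _ ⟨⟨x, ξ⟩, rfl⟩
        refine ⟨x.2, fun y => ?_⟩
        have hξy : (ξ : Module.Dual K V) y = 0 := by
          have := ξ.2; rw [Submodule.mem_dualAnnihilator] at this
          exact this y y.2
        have h' : (⟨(x : V), x.2⟩ : E) = x := rfl
        simp [f, hξy, hrE y, h']
      · rintro ⟨x, ξ⟩ ⟨hx, hξ⟩
        refine ⟨⟨⟨x, hx⟩, ⟨ξ - (ε ⟨x, hx⟩).comp r, ?_⟩⟩, ?_⟩
        · rw [Submodule.mem_dualAnnihilator]
          intro w hw
          simp [hξ ⟨w, hw⟩, hrE ⟨w, hw⟩]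
        · simp [f]
    have hfr : Module.finrank K (LMod E ε) = Module.finrank K (E × E.dualAnnihilator) := by
      rw [← hrange]
      exact (LinearEquiv.ofInjective f hinj).symm.finrank_eq
    have : Module.Free K ↥E.dualAnnihilator := by exact Module.Free.of_divisionRing K ↥E.dualAnnihilator
    rw [hfr, Module.finrank_prod]
    have h1 : Module.finrank K E.dualAnnihilator = Module.finrank K (V ⧸ E) :=
      (Subspace.quotEquivAnnihilator E).symm.finrank_eq
    have hq := Submodule.finrank_quotient_add_finrank E
    omega
end

section
/- Every linear Dirac structure L ⊆ V ⊕ V* is of the form L(E, ε) for E = p_V(L) the projection of L to V and a unique alternating form ε ∈ ∧²E*, where L(E,ε) = {x + ξ ∈ E ⊕ V* : ξ|_E = ε(x,−)}. -/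
/-- Every linear Dirac structure `L ⊆ V ⊕ V*` is of the form `L(E, ε)` with
`E = p_V(L)` and a unique alternating form `ε ∈ ∧²E*`. -/
theorem dirac_eq_LSub
    {K V : Type*} [Field K] [AddCommGroup V] [Module K V] [FiniteDimensional K V]
    (h2 : (2 : K) ≠ 0)
    (L : Set (V × Module.Dual K V)) (hL : IsDirac L) :
    ∃! ε : (Submodule.span K (Prod.fst '' L)) →ₗ[K]
        (Submodule.span K (Prod.fst '' L)) →ₗ[K] K,
      (∀ x, ε x x = 0) ∧ L = LSub (Submodule.span K (Prod.fst '' L)) ε := by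
  classical
  set E := Submodule.span K (Prod.fst '' L) with hE
  -- L is closed under the module operations
  have hzero : (0 : V × Module.Dual K V) ∈ L := by
    rw [hL]; intro q hq; simp [diracPair]
  have hadd : ∀ p p', p ∈ L → p' ∈ L → p + p' ∈ L := by
    intro p p' hp hp'
    rw [hL]; intro q hq
    have h1 := (hL p).mp hp q hq
    have h2 := (hL p').mp hp' q hq
    simp only [diracPair, Prod.fst_add, Prod.snd_add, map_add, LinearMap.add_apply] at *
    linear_combination h1 + h2
  have hsmul : ∀ (c : K) p, p ∈ L → c • p ∈ L := by
    intro c p hp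
    rw [hL]; intro q hq
    have h1 := (hL p).mp hp q hq
    simp only [diracPair, Prod.smul_fst, Prod.smul_snd, map_smul, LinearMap.smul_apply,
      smul_eq_mul] at *
    linear_combination c * h1
  -- every element of E lifts to L
  have hC : ∀ x : E, ∃ ξ, ((x : V), ξ) ∈ L := by
    rintro ⟨x, hx⟩
    refine Submodule.span_induction (p := fun x _ => ∃ ξ, (x, ξ) ∈ L) ?_ ?_ ?_ ?_ hx
    · rintro _ ⟨p, hp, rfl⟩; exact ⟨p.2, hp⟩
    · exact ⟨0, hzero⟩
    · rintro x y _ _ ⟨ξ, hξ⟩ ⟨η, hη⟩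
      exact ⟨ξ + η, hadd _ _ hξ hη⟩
    · rintro c x _ ⟨ξ, hξ⟩
      exact ⟨c • ξ, hsmul c _ hξ⟩
  -- well-definedness of the form
  have hD : ∀ (x : V) (ξ ξ' : Module.Dual K V), (x, ξ) ∈ L → (x, ξ') ∈ L →
      ∀ y ∈ E, ξ y = ξ' y := by
    intro x ξ ξ' h h' y hy
    have hdiff : ((0 : V), ξ - ξ') ∈ L := by
      have := hadd (x, ξ) ((-1 : K) • (x, ξ')) h (hsmul _ _ h')
      have he : (x, ξ) + (-1 : K) • (x, ξ') = ((0 : V), ξ - ξ') := by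
        ext <;> simp [sub_eq_add_neg]
      rwa [he] at this
    have hker : E ≤ LinearMap.ker (ξ - ξ') := by
      rw [hE, Submodule.span_le]
      rintro z ⟨q, hq, rfl⟩
      have := (hL _).mp hdiff q hq
      simpa [diracPair] using this
    have := hker hy
    simpa [LinearMap.sub_apply, sub_eq_zero] using this
  -- choose lifts
  choose ξf hξf using hC
  -- the bilinear form
  let ε : E →ₗ[K] E →ₗ[K] K :=
    LinearMap.mk₂ K (fun x y => ξf x y)
      (fun x y z => by
        have hmem : (((x + y : E) : V), ξf x + ξf y) ∈ L := by
          have := hadd _ _ (hξf x) (hξf y)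
          simpa using this
        have := hD _ _ _ (hξf (x + y)) hmem z z.2
        simpa using this)
      (fun c x y => by
        have hmem : (((c • x : E) : V), c • ξf x) ∈ L := by
          have := hsmul c _ (hξf x)
          simpa using this
        have := hD _ _ _ (hξf (c • x)) hmem y y.2
        simpa using this)
      (fun x y z => by simp)
      (fun c x y => by simp)
  have hεapp : ∀ x y : E, ε x y = ξf x y := fun x y => rfl
  -- alternating
  have halt : ∀ x : E, ε x x = 0 := by
    intro x
    have := (hL _).mp (hξf x) _ (hξf x)
    simp only [diracPair] at this
    have h2' : (2 : K) * ξf x x = 0 := by rw [two_mul]; exact this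
    rcases mul_eq_zero.mp h2' with h | h
    · exact absurd h h2
    · simpa [hεapp] using h
  -- L = LSub E ε
  have hLeq : L = LSub E ε := by
    ext p
    constructor
    · intro hp
      have hx : p.1 ∈ E := Submodule.subset_span ⟨p, hp, rfl⟩
      refine ⟨hx, fun y => ?_⟩
      have := hD p.1 p.2 (ξf ⟨p.1, hx⟩) hp (hξf ⟨p.1, hx⟩) y y.2
      simpa [hεapp] using this
    · rintro ⟨hx, hy⟩
      rw [hL]
      intro q hq
      have hq1 : q.1 ∈ E := Submodule.subset_span ⟨q, hq, rfl⟩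
      have hpair := (hL _).mp (hξf ⟨p.1, hx⟩) q hq
      simp only [diracPair] at hpair ⊢
      have := hy ⟨q.1, hq1⟩
      rw [this, hεapp]
      exact hpair
  refine ⟨ε, ⟨halt, hLeq⟩, ?_⟩
  rintro ε' ⟨-, hε'⟩
  refine LinearMap.ext fun x => LinearMap.ext fun y => ?_
  have hmem : ((x : V), ξf x) ∈ LSub E ε' := by rw [← hε']; exact hξf x
  obtain ⟨hx', hall⟩ := hmem
  have hxx : (⟨(x : V), hx'⟩ : E) = x := Subtype.ext rfl
  have := hall y
  rw [hxx] at this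
  rw [← this, hεapp]
end

section
/- For a linear map f : V → W and a linear Dirac structure L ⊆ W ⊕ W*, the pullback f*L = {X + f*ξ ∈ V ⊕ V* : fX + ξ ∈ L} is again a linear Dirac structure on V (a maximal isotropic subspace of V ⊕ V*). -/
set_option maxHeartbeats 1000000

/-- The pullback `f*L = {X + f*ξ : fX + ξ ∈ L}` of a Dirac structure along a
linear map `f : V → W`. -/
def diracPullback {K V W : Type*} [Field K] [AddCommGroup V] [Module K V]
    [AddCommGroup W] [Module K W] (f : V →ₗ[K] W)
    (L : Set (W × Module.Dual K W)) : Set (V × Module.Dual K V) :=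
  {p | ∃ ξ : Module.Dual K W, p.2 = f.dualMap ξ ∧ (f p.1, ξ) ∈ L}

/-- A linear functional vanishing on the kernel of a linear map factors through it. -/
lemma exists_factor_through {K M W : Type*} [Field K] [AddCommGroup M] [Module K M]
    [AddCommGroup W] [Module K W]
    (Φ : M →ₗ[K] W) (c : M →ₗ[K] K) (h : LinearMap.ker Φ ≤ LinearMap.ker c) :
    ∃ ξ : Module.Dual K W, ∀ m, ξ (Φ m) = c m := by
  set p := LinearMap.ker Φ
  let Φ' : (M ⧸ p) →ₗ[K] W := p.liftQ Φ le_rfl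
  have hinj : LinearMap.ker Φ' = ⊥ := Submodule.ker_liftQ_eq_bot p Φ le_rfl le_rfl
  obtain ⟨g, hg⟩ := Φ'.exists_leftInverse_of_injective hinj
  let c' : (M ⧸ p) →ₗ[K] K := p.liftQ c h
  refine ⟨c' ∘ₗ g, fun m => ?_⟩
  have h1 : Φ m = Φ' (p.mkQ m) := rfl
  have h2 : g (Φ' (p.mkQ m)) = p.mkQ m := by
    have := congrArg (fun h => h (p.mkQ m)) (congrArg DFunLike.coe hg)
    simpa using this
  simp only [LinearMap.comp_apply, h1, h2]
  rfl

/-- The pullback of a linear Dirac structure is a linear Dirac structure. -/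
theorem isDirac_pullback
    {K V W : Type*} [Field K] [AddCommGroup V] [Module K V] [FiniteDimensional K V]
    [AddCommGroup W] [Module K W] [FiniteDimensional K W]
    (h2 : (2 : K) ≠ 0)
    (f : V →ₗ[K] W) (L : Set (W × Module.Dual K W)) (hL : IsDirac L) :
    IsDirac (diracPullback f L) := by
  classical
  -- L is a submodule
  let LS : Submodule K (W × Module.Dual K W) :=
    { carrier := L
      zero_mem' := by
        rw [hL]
        intro q hq
        simp [diracPair]
      add_mem' := by
        intro a b ha hb
        rw [hL]
        intro q hq
        have h1 := (hL a).mp ha q hq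
        have h2 := (hL b).mp hb q hq
        simp only [diracPair, Prod.fst_add, Prod.snd_add, map_add, LinearMap.add_apply] at *
        linear_combination h1 + h2
      smul_mem' := by
        intro c a ha
        rw [hL]
        intro q hq
        have h1 := (hL a).mp ha q hq
        simp only [diracPair, Prod.smul_fst, Prod.smul_snd, map_smul, LinearMap.smul_apply,
          smul_eq_mul] at *
        linear_combination c * h1 }
  intro p
  constructor
  · rintro ⟨ξ, hp2, hpL⟩ q ⟨η, hq2, hqL⟩
    have h0 := (hL _).mp hpL _ hqL
    simp only [diracPair] at h0 ⊢
    rw [hp2, hq2]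
    simpa using h0
  · intro hperp
    obtain ⟨X, α⟩ := p
    -- the map Φ : LS × V → W, ((w,η),Y) ↦ w + f Y
    set Φ : (↥LS × V) →ₗ[K] W :=
      (((LinearMap.fst K W (Module.Dual K W)).comp LS.subtype).coprod f) with hΦ
    -- the functional c : ((w,η),Y) ↦ -η(fX) + α Y
    set c : (↥LS × V) →ₗ[K] K :=
      ((-((Module.Dual.eval K W (f X)).comp
        ((LinearMap.snd K W (Module.Dual K W)).comp LS.subtype))).coprod α) with hc
    have hker : LinearMap.ker Φ ≤ LinearMap.ker c := by
      rintro ⟨z, Y⟩ hm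
      have hzL : (z : W × Module.Dual K W) ∈ L := z.2
      have hΦ0 : (z : W × Module.Dual K W).1 + f Y = 0 := hm
      -- then (-Y, f.dualMap z.2) is in the pullback
      have hq : ((-Y, f.dualMap (z : W × Module.Dual K W).2) : V × Module.Dual K V)
          ∈ diracPullback f L := by
        refine ⟨(z : W × Module.Dual K W).2, rfl, ?_⟩
        have : f (-Y) = (z : W × Module.Dual K W).1 := by
          rw [map_neg]; exact (eq_neg_of_add_eq_zero_left hΦ0).symm
        rw [this]
        exact hzL
      have h0 := hperp _ hq
      simp only [diracPair, LinearMap.dualMap_apply, map_neg] at h0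
      show c (z, Y) = 0
      simp only [hc, LinearMap.coprod_apply, LinearMap.neg_apply, LinearMap.comp_apply,
        LinearMap.snd_apply, Submodule.coe_subtype, Module.Dual.eval_apply]
      linear_combination -h0
    obtain ⟨ξ, hξ⟩ := exists_factor_through (K := K) (M := ↥LS × V) (W := W) Φ c hker
    have hξf : ∀ Y : V, ξ (f Y) = α Y := by
      intro Y
      have := hξ (0, Y)
      simpa [hΦ, hc] using this
    have hξw : ∀ z : ↥LS, ξ (z : W × Module.Dual K W).1
        = -((z : W × Module.Dual K W).2 (f X)) := by
      intro z
      have := hξ (z, 0)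
      simpa [hΦ, hc] using this
    refine ⟨ξ, ?_, ?_⟩
    · ext Y
      exact (hξf Y).symm
    · rw [hL]
      rintro ⟨w, η⟩ hq
      have := hξw ⟨(w, η), hq⟩
      simp only [diracPair]
      simp only at this
      linear_combination this
end

section
/- Let L₁, L₂ be linear Dirac structures on V₁, V₂ and f : V₁ → V₂ linear. Condition (M2): p_{V₁*}⁻¹(f*(p_{V₂*}L₂)) ∩ L₁ ⊆ f*L₂ is equivalent to condition (M2″): f*L₂ ⊆ L₁ + f⁻¹(L₂ ∩ V₂), where f⁻¹(L₂ ∩ V₂) ⊆ V₁ ⊆ V₁ ⊕ V₁* and f*L₂ is the pullback Dirac structure. -/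
namespace DiracAux

open Module LinearMap Submodule

variable (K V : Type*) [Field K] [AddCommGroup V] [Module K V]

/-- The canonical pairing as a bilinear form. -/
def dForm : LinearMap.BilinForm K (V × Module.Dual K V) :=
  LinearMap.mk₂ K (fun p q => q.2 p.1 + p.2 q.1)
    (fun p p' q => by simp; ring)
    (fun c p q => by simp; ring)
    (fun p q q' => by simp; ring)
    (fun c p q => by simp; ring)

variable {K V}

@[simp] lemma dForm_apply (p q : V × Module.Dual K V) :
    dForm K V p q = q.2 p.1 + p.2 q.1 := rfl

lemma dForm_symm (p q : V × Module.Dual K V) : dForm K V p q = dForm K V q p := by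
  simp [add_comm]

lemma dForm_refl : (dForm K V).IsRefl := fun p q h => by
  rw [dForm_symm]; exact h

lemma dForm_nondeg : (dForm K V).Nondegenerate := by
  refine (LinearMap.IsRefl.nondegenerate_iff_separatingLeft (B := dForm K V) dForm_refl).mpr ?_
  intro p hp
  have h1 : p.2 = 0 := by
    ext y; simpa using hp (y, 0)
  have h2 : p.1 = 0 := by
    apply (Module.forall_dual_apply_eq_zero_iff K p.1).mp
    intro η; simpa using hp (0, η)
  exact Prod.ext h2 h1

lemma orth_sup (A B : Submodule K (V × Module.Dual K V)) :
    (dForm K V).orthogonal (A ⊔ B) =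
      (dForm K V).orthogonal A ⊓ (dForm K V).orthogonal B := by
  ext m
  simp only [LinearMap.BilinForm.mem_orthogonal_iff, Submodule.mem_inf]
  constructor
  · intro h
    exact ⟨fun n hn => h n (Submodule.mem_sup_left hn),
           fun n hn => h n (Submodule.mem_sup_right hn)⟩
  · rintro ⟨h1, h2⟩ n hn
    obtain ⟨a, ha, b, hb, rfl⟩ := Submodule.mem_sup.mp hn
    have ha' := h1 a ha
    have hb' := h2 b hb
    show dForm K V (a + b) m = 0
    rw [map_add, LinearMap.add_apply, ha', hb', add_zero]

variable [FiniteDimensional K V]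

lemma orth_inf (A B : Submodule K (V × Module.Dual K V)) :
    (dForm K V).orthogonal (A ⊓ B) =
      (dForm K V).orthogonal A ⊔ (dForm K V).orthogonal B := by
  conv_lhs => rw [← LinearMap.BilinForm.orthogonal_orthogonal dForm_nondeg dForm_refl A,
    ← LinearMap.BilinForm.orthogonal_orthogonal dForm_nondeg dForm_refl B,
    ← orth_sup]
  rw [LinearMap.BilinForm.orthogonal_orthogonal dForm_nondeg dForm_refl]

lemma exists_submodule {L : Set (V × Module.Dual K V)} (hL : IsDirac L) :
    ∃ N : Submodule K (V × Module.Dual K V),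
      (↑N : Set (V × Module.Dual K V)) = L ∧ (dForm K V).orthogonal N = N := by
  have h1 : (((dForm K V).orthogonal (span K L) : Submodule K _) : Set _) = L := by
    ext p
    simp only [SetLike.mem_coe, LinearMap.BilinForm.mem_orthogonal_iff]
    constructor
    · intro h
      rw [hL p]
      intro q hq
      have hq' := h q (Submodule.subset_span hq)
      have : dForm K V q p = 0 := hq'
      simp only [dForm_apply] at this
      show q.2 p.1 + p.2 q.1 = 0
      linear_combination this
    · intro hp q hq
      have hle : span K L ≤ LinearMap.ker ((dForm K V).flip p) := by
        apply Submodule.span_le.mpr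
        intro q' hq'
        simp only [SetLike.mem_coe, LinearMap.mem_ker, LinearMap.flip_apply]
        have := (hL p).mp hp q' hq'
        have h2 : q'.2 p.1 + p.2 q'.1 = 0 := this
        show p.2 q'.1 + q'.2 p.1 = 0
        linear_combination h2
      have := hle hq
      simpa using this
  have h2 : span K L = (dForm K V).orthogonal (span K L) := by
    conv_lhs => rw [← h1, Submodule.span_eq]
  refine ⟨span K L, ?_, h2.symm⟩
  rw [h2]; exact h1

lemma isotropic {N : Submodule K (V × Module.Dual K V)}
    (hNo : (dForm K V).orthogonal N = N) {p q : V × Module.Dual K V}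
    (hp : p ∈ N) (hq : q ∈ N) : dForm K V p q = 0 := by
  have hq' : q ∈ (dForm K V).orthogonal N := by rw [hNo]; exact hq
  exact hq' p hp

lemma ann_comap {W : Type*} [AddCommGroup W] [Module K W]
    (f : V →ₗ[K] W) (U : Submodule K W) :
    (U.comap f).dualAnnihilator = (U.dualAnnihilator).map f.dualMap := by
  have h1 : U.comap f = LinearMap.ker (U.mkQ ∘ₗ f) := by
    ext x
    simp [LinearMap.mem_ker, Submodule.Quotient.mk_eq_zero]
  rw [h1, ← LinearMap.range_dualMap_eq_dualAnnihilator_ker,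
    ← LinearMap.dualMap_comp_dualMap, LinearMap.range_comp,
    LinearMap.range_dualMap_eq_dualAnnihilator_ker, Submodule.ker_mkQ]

end DiracAux
open Module LinearMap Submodule DiracAux

/-- Condition (M2) is equivalent to condition (M2″):
`f*L₂ ⊆ L₁ + f⁻¹(L₂ ∩ V₂)`. -/
theorem M2_iff_M2''
    {K V₁ V₂ : Type*} [Field K]
    [AddCommGroup V₁] [Module K V₁] [FiniteDimensional K V₁]
    [AddCommGroup V₂] [Module K V₂] [FiniteDimensional K V₂]
    (h2 : (2 : K) ≠ 0)
    (f : V₁ →ₗ[K] V₂)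
    (L₁ : Set (V₁ × Module.Dual K V₁)) (hL₁ : IsDirac L₁)
    (L₂ : Set (V₂ × Module.Dual K V₂)) (hL₂ : IsDirac L₂) :
    (∀ p ∈ L₁, (∃ ξ : Module.Dual K V₂,
        (∃ Y : V₂, (Y, ξ) ∈ L₂) ∧ p.2 = f.dualMap ξ) → p ∈ diracPullback f L₂)
    ↔
    (∀ p ∈ diracPullback f L₂, ∃ a ∈ L₁, ∃ x : V₁,
        (f x, (0 : Module.Dual K V₂)) ∈ L₂ ∧
        p = a + ((x, (0 : Module.Dual K V₁)) : V₁ × Module.Dual K V₁)) := by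
  obtain ⟨N₁, hN₁coe, hN₁o⟩ := exists_submodule hL₁
  obtain ⟨N₂, hN₂coe, hN₂o⟩ := exists_submodule hL₂
  constructor
  · -- (M2) → (M2″)
    intro hM2 q hq
    obtain ⟨η, hqη, hfq⟩ := hq
    set K₀ : Submodule K V₁ :=
      N₂.comap ((LinearMap.inl K V₂ (Module.Dual K V₂)).comp f) with hK₀def
    set KK : Submodule K (V₁ × Module.Dual K V₁) := K₀.prod ⊥ with hKKdef
    suffices hs : q ∈ N₁ ⊔ KK by
      obtain ⟨a, ha, b, hb, hab⟩ := Submodule.mem_sup.mp hs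
      have hbm := Submodule.mem_prod.mp hb
      have hb1 : (f b.1, (0 : Module.Dual K V₂)) ∈ N₂ := hbm.1
      have hb2 : b.2 = 0 := Submodule.mem_bot K |>.mp hbm.2
      refine ⟨a, by rw [← hN₁coe]; exact ha, b.1, by rw [← hN₂coe]; exact hb1, ?_⟩
      rw [← hab]
      congr 1
      exact Prod.ext rfl hb2
    have key : (dForm K V₁).orthogonal (N₁ ⊓ (dForm K V₁).orthogonal KK) = N₁ ⊔ KK := by
      rw [orth_inf, hN₁o,
        LinearMap.BilinForm.orthogonal_orthogonal dForm_nondeg dForm_refl]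
    rw [← key]
    intro n hn
    obtain ⟨hn1, hn2⟩ := Submodule.mem_inf.mp hn
    -- n.2 annihilates K₀
    have hann : n.2 ∈ K₀.dualAnnihilator := by
      rw [Submodule.mem_dualAnnihilator]
      intro x hx
      have hx' : ((x, (0 : Module.Dual K V₁)) : V₁ × Module.Dual K V₁) ∈ KK :=
        Submodule.mem_prod.mpr ⟨hx, Submodule.mem_bot K |>.mpr rfl⟩
      have := hn2 (x, 0) hx'
      have h0 : dForm K V₁ (x, (0 : Module.Dual K V₁)) n = 0 := this
      simpa using h0
    set W : Submodule K (Module.Dual K V₂) :=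
      N₂.map (LinearMap.snd K V₂ (Module.Dual K V₂)) with hWdef
    have hK₀ : K₀ = (W.dualCoannihilator).comap f := by
      ext x
      simp only [hK₀def, Submodule.mem_comap, LinearMap.comp_apply, LinearMap.inl_apply,
        Submodule.mem_dualCoannihilator]
      constructor
      · intro hx φ hφ
        obtain ⟨n₂, hn₂, rfl⟩ := Submodule.mem_map.mp hφ
        have := isotropic hN₂o hn₂ hx
        simpa using this
      · intro hx
        rw [← hN₂o]
        intro m hm
        have hgoal : dForm K V₂ m (f x, (0 : Module.Dual K V₂)) = 0 := by
          show (0 : Module.Dual K V₂) m.1 + m.2 (f x) = 0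
          simp only [LinearMap.zero_apply, zero_add]
          exact hx m.2 (Submodule.mem_map.mpr ⟨m, hm, rfl⟩)
        exact hgoal
    have hmem : n.2 ∈ W.map f.dualMap := by
      rw [hK₀, ann_comap] at hann
      rwa [Subspace.dualCoannihilator_dualAnnihilator_eq] at hann
    obtain ⟨ξ, hξW, hξ⟩ := Submodule.mem_map.mp hmem
    obtain ⟨m₂, hm₂, hm₂ξ⟩ := Submodule.mem_map.mp hξW
    have hnL₁ : n ∈ L₁ := by rw [← hN₁coe]; exact hn1
    have hpull : n ∈ diracPullback f L₂ := by
      refine hM2 n hnL₁ ⟨ξ, ⟨m₂.1, ?_⟩, hξ.symm⟩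
      rw [← hN₂coe]
      have : ((m₂.1, ξ) : V₂ × Module.Dual K V₂) = m₂ := Prod.ext rfl hm₂ξ.symm
      rw [this]; exact hm₂
    obtain ⟨ξ', hξ', hfn⟩ := hpull
    have hfnN : (f n.1, ξ') ∈ N₂ := by rw [← hN₂coe] at hfn; exact hfn
    have hfqN : (f q.1, η) ∈ N₂ := by rw [← hN₂coe] at hfq; exact hfq
    have hiso := isotropic hN₂o hfnN hfqN
    show dForm K V₁ n q = 0
    simp only [dForm_apply] at hiso ⊢
    simp only [hqη, hξ', LinearMap.dualMap_apply] at *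
    linear_combination hiso
  · -- (M2″) → (M2)
    intro hM2'' p hp hyp
    obtain ⟨ξ₀, ⟨Y₀, hY₀⟩, hpξ⟩ := hyp
    have hpN : p ∈ N₁ := by rw [← hN₁coe] at hp; exact hp
    have hY₀N : ((Y₀, ξ₀) : V₂ × Module.Dual K V₂) ∈ N₂ := by
      rw [← hN₂coe] at hY₀; exact hY₀
    set M : Submodule K (V₂ × Module.Dual K V₂) := (LinearMap.range f).prod ⊤ with hMdef
    have horthM : (dForm K V₂).orthogonal M =
        (⊥ : Submodule K V₂).prod (LinearMap.range f).dualAnnihilator := by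
      ext m
      simp only [LinearMap.BilinForm.mem_orthogonal_iff, Submodule.mem_prod,
        Submodule.mem_bot, Submodule.mem_dualAnnihilator]
      constructor
      · intro h
        constructor
        · apply (Module.forall_dual_apply_eq_zero_iff K m.1).mp
          intro η'
          have hmem : ((0, η') : V₂ × Module.Dual K V₂) ∈ M :=
            Submodule.mem_prod.mpr ⟨zero_mem _, trivial⟩
          have h0 : dForm K V₂ (0, η') m = 0 := h (0, η') hmem
          simpa using h0
        · intro w hw
          have hmem : ((w, 0) : V₂ × Module.Dual K V₂) ∈ M :=
            Submodule.mem_prod.mpr ⟨hw, trivial⟩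
          have h0 : dForm K V₂ (w, 0) m = 0 := h (w, 0) hmem
          simpa using h0
      · rintro ⟨h1, hμ⟩ n hn
        have hn1 : n.1 ∈ LinearMap.range f := (Submodule.mem_prod.mp hn).1
        show dForm K V₂ n m = 0
        simp [dForm_apply, h1, hμ n.1 hn1]
    have hstep : ((f p.1, ξ₀) : V₂ × Module.Dual K V₂) ∈
        (dForm K V₂).orthogonal (N₂ ⊓ M) := by
      intro n hn
      obtain ⟨hn2, hnM⟩ := Submodule.mem_inf.mp hn
      obtain ⟨Y, hY⟩ := (Submodule.mem_prod.mp hnM).1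
      have hnL₂ : n ∈ L₂ := by rw [← hN₂coe]; exact hn2
      have hpb : ((Y, f.dualMap n.2) : V₁ × Module.Dual K V₁) ∈ diracPullback f L₂ := by
        refine ⟨n.2, rfl, ?_⟩
        have : ((f Y, n.2) : V₂ × Module.Dual K V₂) = n := Prod.ext hY rfl
        rw [this]; exact hnL₂
      obtain ⟨a, ha, x, hx, hax⟩ := hM2'' _ hpb
      have haN : a ∈ N₁ := by rw [← hN₁coe] at ha; exact ha
      have hxN : ((f x, (0 : Module.Dual K V₂)) : V₂ × Module.Dual K V₂) ∈ N₂ := by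
        rw [← hN₂coe] at hx; exact hx
      have hξ₀x : ξ₀ (f x) = 0 := by
        have := isotropic hN₂o hY₀N hxN
        simpa using this
      have e1 : dForm K V₁ p ((Y, f.dualMap n.2) : V₁ × Module.Dual K V₁) = 0 := by
        rw [hax, map_add]
        have hpa : dForm K V₁ p a = 0 := isotropic hN₁o hpN haN
        have hpx : dForm K V₁ p ((x, (0 : Module.Dual K V₁)) : V₁ × Module.Dual K V₁) = 0 := by
          show (0 : Module.Dual K V₁) p.1 + p.2 x = 0
          simp [hpξ, hξ₀x]
        rw [hpa, hpx, add_zero]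
      show dForm K V₂ n (f p.1, ξ₀) = 0
      simp only [dForm_apply] at e1 ⊢
      simp only [hpξ, LinearMap.dualMap_apply] at e1
      rw [← hY]
      linear_combination e1
    rw [orth_inf, hN₂o, horthM] at hstep
    obtain ⟨z, hz, w, hw, hzw⟩ := Submodule.mem_sup.mp hstep
    have hwm := Submodule.mem_prod.mp hw
    have hw1 : w.1 = 0 := Submodule.mem_bot K |>.mp hwm.1
    have hwμ := hwm.2
    have hfst : z.1 + w.1 = f p.1 := congrArg Prod.fst hzw
    have hsnd : z.2 + w.2 = ξ₀ := congrArg Prod.snd hzw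
    have hz1 : z.1 = f p.1 := by rw [← hfst, hw1, add_zero]
    refine ⟨z.2, ?_, ?_⟩
    · have hfw : f.dualMap w.2 = 0 := by
        ext x
        have := (Submodule.mem_dualAnnihilator _).mp hwμ (f x) ⟨x, rfl⟩
        simpa using this
      rw [hpξ, ← hsnd, map_add, hfw, add_zero]
    · have : ((f p.1, z.2) : V₂ × Module.Dual K V₂) = z := Prod.ext hz1.symm rfl
      rw [this, ← hN₂coe]
      exact hz
end
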